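/- Let A → U → S be an extension of a semilattice of groups A by an F-inverse monoid S (with idempotent-separating epimorphism j : U → S). Then there exists an order-preserving transversal ρ : S → U of j. -/
import Mathlib

/-- An inverse semigroup structure: `iv` assigns to each element its unique
(generalized) inverse. -/
structure InvSemi (S : Type*) [Semigroup S] (iv : S → S) : Prop where
  rr : ∀ s, s * iv s * s = s
  ri : ∀ s, iv s * s * iv s = iv s
  uniq : ∀ s t, s * t * s = s → t * s * t = t → t = iv s

/-- The natural partial order: `s ≤ t` iff `s = e * t` for an idempotent `e`. -/
def natLe {S : Type*} [Semigroup S] (s t : S) : Prop :=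
  ∃ e, IsIdempotentElem e ∧ s = e * t

/-- The minimum group congruence σ: `(s,t) ∈ σ` iff `e * s = e * t` for some
idempotent `e`. -/
def sigmaRel {S : Type*} [Semigroup S] (s t : S) : Prop :=
  ∃ e, IsIdempotentElem e ∧ e * s = e * t

section Lemmas
variable {T : Type*} [Semigroup T] {iv : T → T}

lemma IS.inv_idem (h : InvSemi T iv) {e : T} (he : IsIdempotentElem e) : iv e = e := by
  have h1 : e * e * e = e := by rw [he.eq, he.eq]
  exact (h.uniq e e h1 h1).symm

lemma IS.idem_si (h : InvSemi T iv) (s : T) : IsIdempotentElem (s * iv s) := by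
  show s * iv s * (s * iv s) = s * iv s
  rw [show s * iv s * (s * iv s) = (s * iv s * s) * iv s by simp [mul_assoc], h.rr]

lemma IS.idem_is (h : InvSemi T iv) (s : T) : IsIdempotentElem (iv s * s) := by
  show iv s * s * (iv s * s) = iv s * s
  rw [show iv s * s * (iv s * s) = (iv s * s * iv s) * s by simp [mul_assoc], h.ri]

lemma IS.idem_prod (h : InvSemi T iv) {e f : T} (he : IsIdempotentElem e) (hf : IsIdempotentElem f) :
    IsIdempotentElem (e * f) := by
  set x := iv (e * f) with hxdef
  have hx1 : (e * f) * x * (e * f) = e * f := h.rr _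
  have hx2 : x * (e * f) * x = x := h.ri _
  have hA1 : (e * f) * (f * x * e) * (e * f) = e * f := by
    calc (e * f) * (f * x * e) * (e * f)
        = e * ((f * f) * x * (e * e)) * f := by simp [mul_assoc]
      _ = e * (f * x * e) * f := by rw [hf.eq, he.eq]
      _ = (e * f) * x * (e * f) := by simp [mul_assoc]
      _ = e * f := hx1
  have hA2 : (f * x * e) * (e * f) * (f * x * e) = f * x * e := by
    calc (f * x * e) * (e * f) * (f * x * e)
        = f * (x * ((e * e) * (f * f)) * x) * e := by simp [mul_assoc]
      _ = f * (x * (e * f) * x) * e := by rw [he.eq, hf.eq]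
      _ = f * x * e := by rw [hx2]
  have hxe : f * x * e = x := h.uniq (e * f) (f * x * e) hA1 hA2
  have hxi : IsIdempotentElem x := by
    show x * x = x
    calc x * x = (f * x * e) * (f * x * e) := by rw [hxe]
      _ = f * (x * (e * f) * x) * e := by simp [mul_assoc]
      _ = f * x * e := by rw [hx2]
      _ = x := hxe
  have hef : e * f = x := h.uniq x (e * f) hx2 hx1 |>.trans (IS.inv_idem h hxi)
  rw [IsIdempotentElem, hef]; exact hxi

lemma IS.idem_comm (h : InvSemi T iv) {e f : T} (he : IsIdempotentElem e) (hf : IsIdempotentElem f) :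
    e * f = f * e := by
  have hef := IS.idem_prod h he hf
  have hfe := IS.idem_prod h hf he
  have h1 : (e * f) * (f * e) * (e * f) = e * f := by
    calc (e * f) * (f * e) * (e * f)
        = e * (f * f) * (e * e) * f := by simp [mul_assoc]
      _ = (e * f) * (e * f) := by rw [hf.eq, he.eq]; simp [mul_assoc]
      _ = e * f := hef.eq
  have h2 : (f * e) * (e * f) * (f * e) = f * e := by
    calc (f * e) * (e * f) * (f * e)
        = f * (e * e) * (f * f) * e := by simp [mul_assoc]
      _ = (f * e) * (f * e) := by rw [he.eq, hf.eq]; simp [mul_assoc]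
      _ = f * e := hfe.eq
  calc e * f = iv (e * f) := (IS.inv_idem h hef).symm
    _ = f * e := (h.uniq (e * f) (f * e) h1 h2).symm

lemma IS.inv_mul (h : InvSemi T iv) (s t : T) : iv (s * t) = iv t * iv s := by
  have h1 : (s * t) * (iv t * iv s) * (s * t) = s * t := by
    calc (s * t) * (iv t * iv s) * (s * t)
        = s * ((t * iv t) * (iv s * s)) * t := by simp [mul_assoc]
      _ = s * ((iv s * s) * (t * iv t)) * t := by
          rw [IS.idem_comm h (IS.idem_si h t) (IS.idem_is h s)]
      _ = (s * iv s * s) * (t * iv t * t) := by simp [mul_assoc]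
      _ = s * t := by rw [h.rr, h.rr]
  have h2 : (iv t * iv s) * (s * t) * (iv t * iv s) = iv t * iv s := by
    calc (iv t * iv s) * (s * t) * (iv t * iv s)
        = iv t * ((iv s * s) * (t * iv t)) * iv s := by simp [mul_assoc]
      _ = iv t * ((t * iv t) * (iv s * s)) * iv s := by
          rw [IS.idem_comm h (IS.idem_is h s) (IS.idem_si h t)]
      _ = (iv t * t * iv t) * (iv s * s * iv s) := by simp [mul_assoc]
      _ = iv t * iv s := by rw [h.ri, h.ri]
  exact (h.uniq (s * t) (iv t * iv s) h1 h2).symm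

lemma IS.natLe_canon (h : InvSemi T iv) {a b : T} (hab : natLe a b) : a = (a * iv a) * b := by
  obtain ⟨e, he, hab⟩ := hab
  have key : a * iv a = e * (b * iv b) := by
    calc a * iv a = (e * b) * iv (e * b) := by rw [← hab]
      _ = (e * b) * (iv b * iv e) := by rw [IS.inv_mul h]
      _ = e * (b * iv b) * e := by rw [IS.inv_idem h he]; simp [mul_assoc]
      _ = (b * iv b) * e * e := by
          rw [show e * (b * iv b) = (b * iv b) * e from IS.idem_comm h he (IS.idem_si h b)]
      _ = (b * iv b) * e := by rw [mul_assoc, he.eq]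
      _ = e * (b * iv b) := (IS.idem_comm h he (IS.idem_si h b)).symm
  calc a = e * b := hab
    _ = e * (b * iv b * b) := by rw [h.rr]
    _ = (e * (b * iv b)) * b := by simp [mul_assoc]
    _ = (a * iv a) * b := by rw [← key]

lemma IS.natLe_si (h : InvSemi T iv) {a b : T} (hab : natLe a b) :
    (a * iv a) * (b * iv b) = a * iv a := by
  obtain ⟨e, he, hab⟩ := hab
  have key : a * iv a = e * (b * iv b) := by
    calc a * iv a = (e * b) * iv (e * b) := by rw [← hab]
      _ = (e * b) * (iv b * iv e) := by rw [IS.inv_mul h]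
      _ = e * (b * iv b) * e := by rw [IS.inv_idem h he]; simp [mul_assoc]
      _ = (b * iv b) * e * e := by
          rw [show e * (b * iv b) = (b * iv b) * e from IS.idem_comm h he (IS.idem_si h b)]
      _ = (b * iv b) * e := by rw [mul_assoc, he.eq]
      _ = e * (b * iv b) := (IS.idem_comm h he (IS.idem_si h b)).symm
  calc (a * iv a) * (b * iv b) = e * ((b * iv b) * (b * iv b)) := by
        rw [key]; simp [mul_assoc]
    _ = e * (b * iv b) := by rw [(IS.idem_si h b).eq]
    _ = a * iv a := key.symm

lemma IS.natLe_antisymm (h : InvSemi T iv) {a b : T} (hab : natLe a b) (hba : natLe b a) : a = b := by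
  have h1 := IS.natLe_si h hab
  have h2 := IS.natLe_si h hba
  have hEF : a * iv a = b * iv b := by
    rw [← h1, IS.idem_comm h (IS.idem_si h a) (IS.idem_si h b), h2]
  calc a = (a * iv a) * b := IS.natLe_canon h hab
    _ = (b * iv b) * b := by rw [hEF]
    _ = b := h.rr b

lemma IS.sigma_symm {a b : T} : sigmaRel a b → sigmaRel b a :=
  fun ⟨e, he, hh⟩ => ⟨e, he, hh.symm⟩

lemma IS.sigma_trans (h : InvSemi T iv) {a b c : T} (h1 : sigmaRel a b) (h2 : sigmaRel b c) :
    sigmaRel a c := by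
  obtain ⟨e, he, h1⟩ := h1
  obtain ⟨f, hf, h2⟩ := h2
  refine ⟨e * f, IS.idem_prod h he hf, ?_⟩
  calc (e * f) * a = f * (e * a) := by
        rw [IS.idem_comm h he hf]; simp [mul_assoc]
    _ = f * (e * b) := by rw [h1]
    _ = e * (f * b) := by rw [← mul_assoc, ← mul_assoc, IS.idem_comm h he hf]
    _ = e * (f * c) := by rw [h2]
    _ = (e * f) * c := (mul_assoc _ _ _).symm

lemma IS.sigma_congr_right (h : InvSemi T iv) {a b : T} (c : T) (hst : sigmaRel a b) :
    sigmaRel (a * c) (b * c) := by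
  obtain ⟨e, he, hh⟩ := hst
  exact ⟨e, he, by rw [← mul_assoc, ← mul_assoc, hh]⟩

lemma IS.conj_act (h : InvSemi T iv) (c : T) {e : T} (he : IsIdempotentElem e) (z : T) :
    (c * e * iv c) * (c * z) = c * (e * z) := by
  calc (c * e * iv c) * (c * z) = c * (e * (iv c * c)) * z := by simp [mul_assoc]
    _ = c * ((iv c * c) * e) * z := by rw [IS.idem_comm h he (IS.idem_is h c)]
    _ = (c * iv c * c) * (e * z) := by simp [mul_assoc]
    _ = c * (e * z) := by rw [h.rr]

lemma IS.idem_conj (h : InvSemi T iv) (c : T) {e : T} (he : IsIdempotentElem e) :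
    IsIdempotentElem (c * e * iv c) := by
  show (c * e * iv c) * (c * e * iv c) = c * e * iv c
  calc (c * e * iv c) * (c * e * iv c) = (c * e * iv c) * (c * (e * iv c)) := by
        rw [mul_assoc c e (iv c)]
    _ = c * (e * (e * iv c)) := IS.conj_act h c he _
    _ = c * e * iv c := by rw [← mul_assoc e e, he.eq, mul_assoc]

lemma IS.natLe_mul_left (h : InvSemi T iv) {a b : T} (c : T) (hab : natLe a b) :
    natLe (c * a) (c * b) := by
  obtain ⟨e, he, hab⟩ := hab
  exact ⟨c * e * iv c, IS.idem_conj h c he, by rw [IS.conj_act h c he, ← hab]⟩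

lemma IS.hom_inv {T' : Type*} [Semigroup T'] {iv' : T' → T'} (h : InvSemi T iv)
    (h' : InvSemi T' iv') (j : T →ₙ* T') (u : T) : j (iv u) = iv' (j u) := by
  apply h'.uniq
  · rw [← map_mul, ← map_mul, h.rr]
  · rw [← map_mul, ← map_mul, h.ri]

end Lemmas
/-- Any extension `A → U → S` of a semilattice of groups `A` by an F-inverse
monoid `S` admits an order-preserving transversal of `j`. -/
theorem stmt19 {A U S : Type*} [Semigroup A] [Semigroup U] [Semigroup S]
    (ivA : A → A) (ivU : U → U) (ivS : S → S)
    (hA : InvSemi A ivA) (hCl : ∀ a : A, a * ivA a = ivA a * a)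
    (hU : InvSemi U ivU) (hS : InvSemi S ivS)
    (hone : ∃ u : S, ∀ s : S, u * s = s ∧ s * u = s)
    (hFinv : ∀ s : S, ∃ m : S, sigmaRel s m ∧
      ∀ t : S, sigmaRel s t → natLe t m)
    (i : A →ₙ* U) (j : U →ₙ* S)
    (hi : Function.Injective i) (hj : Function.Surjective j)
    (hjsep : ∀ e f : U, IsIdempotentElem e → IsIdempotentElem f →
      j e = j f → e = f)
    (hrange : Set.range i = {u : U | IsIdempotentElem (j u)}) :
    ∃ ρ : S → U, (∀ s, j (ρ s) = s) ∧
      (∀ e : S, IsIdempotentElem e → IsIdempotentElem (ρ e)) ∧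
      (∀ s t : S, natLe s t → natLe (ρ s) (ρ t)) := by
  classical
  obtain ⟨one, hone⟩ := hone
  choose lift hlift using hj
  set eps : S → U := fun f => lift f * ivU (lift f) with hepsdef
  have heps_idem : ∀ f, IsIdempotentElem (eps f) := fun f => IS.idem_si hU _
  have heps_j : ∀ f : S, IsIdempotentElem f → j (eps f) = f := by
    intro f hf
    show j (lift f * ivU (lift f)) = f
    rw [map_mul, IS.hom_inv hU hS j, hlift, IS.inv_idem hS hf, hf.eq]
  set M : S → S := fun s => (hFinv s).choose with hMdef
  have hM1 : ∀ s, sigmaRel s (M s) := fun s => (hFinv s).choose_spec.1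
  have hM2 : ∀ s t, sigmaRel s t → natLe t (M s) := fun s => (hFinv s).choose_spec.2
  have hsigma_refl : ∀ s : S, sigmaRel s s := fun s => ⟨s * ivS s, IS.idem_si hS s, rfl⟩
  have hle_M : ∀ s, natLe s (M s) := fun s => hM2 s s (hsigma_refl s)
  have hMconst : ∀ s t, sigmaRel s t → M s = M t := by
    intro s t hst
    apply IS.natLe_antisymm hS
    · exact hM2 t (M s) (IS.sigma_trans hS (IS.sigma_symm hst) (hM1 s))
    · exact hM2 s (M t) (IS.sigma_trans hS hst (hM1 t))
  have hMidem : ∀ e : S, IsIdempotentElem e → IsIdempotentElem (M e) := by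
    intro e he
    have h1 : sigmaRel e one := ⟨e, he, by rw [he.eq, (hone e).2]⟩
    have hone_le : natLe one (M e) := hM2 e one h1
    have hMone : sigmaRel (M e) one := IS.sigma_trans hS (IS.sigma_symm (hM1 e)) h1
    have hmm : sigmaRel e (M e * M e) := by
      have h2 : sigmaRel (M e * M e) (one * M e) := IS.sigma_congr_right hS (M e) hMone
      rw [(hone (M e)).1] at h2
      exact IS.sigma_trans hS (hM1 e) (IS.sigma_symm h2)
    have hle1 : natLe (M e * M e) (M e) := hM2 e _ hmm
    have hle2 : natLe (M e) (M e * M e) := by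
      have h3 := IS.natLe_mul_left hS (M e) hone_le
      rwa [(hone (M e)).2] at h3
    exact IS.natLe_antisymm hS hle1 hle2
  set L : S → U := fun s => if IsIdempotentElem s then eps s else lift s with hLdef
  have hLj : ∀ s, j (L s) = s := by
    intro s
    show j (if IsIdempotentElem s then eps s else lift s) = s
    split
    · exact heps_j s ‹_›
    · exact hlift s
  have hLidem : ∀ s, IsIdempotentElem s → L s = eps s := by
    intro s hs
    show (if IsIdempotentElem s then eps s else lift s) = eps s
    rw [if_pos hs]
  refine ⟨fun s => eps (s * ivS s) * L (M s), ?_, ?_, ?_⟩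
  · intro s
    show j (eps (s * ivS s) * L (M s)) = s
    rw [map_mul, heps_j _ (IS.idem_si hS s), hLj]
    exact (IS.natLe_canon hS (hle_M s)).symm
  · intro e he
    show IsIdempotentElem (eps (e * ivS e) * L (M e))
    rw [hLidem _ (hMidem e he)]
    exact IS.idem_prod hU (heps_idem _) (heps_idem _)
  · intro s t hst
    have hsig : sigmaRel s t := by
      obtain ⟨e, he, h'⟩ := hst
      exact ⟨e, he, by rw [h', ← mul_assoc, he.eq]⟩
    have hMeq : M s = M t := hMconst s t hsig
    have hUss : eps (s * ivS s) * eps (t * ivS t) = eps (s * ivS s) := by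
      apply hjsep _ _ (IS.idem_prod hU (heps_idem _) (heps_idem _)) (heps_idem _)
      rw [map_mul, heps_j _ (IS.idem_si hS s), heps_j _ (IS.idem_si hS t)]
      exact IS.natLe_si hS hst
    refine ⟨eps (s * ivS s), heps_idem _, ?_⟩
    show eps (s * ivS s) * L (M s) = eps (s * ivS s) * (eps (t * ivS t) * L (M t))
    rw [hMeq, ← mul_assoc, hUss]
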